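/- arXiv:2511.00931 — 2 statements merged into one kernel-verified Lean document; each statement's English description precedes it below -/
import Mathlib

section
/- Suppose M, N satisfy (h₁) with exponent α ∈ ℝ and (h₂) with exponent β ∈ ℕ ∪ {0}. Let u ∈ C²(Ω) and let Φ : I → ℝ be a C² function on an open interval I containing the range of u with Φ' > 0 on I. Then for every x ∈ Ω: M(x, D(Φ∘u)(x), D²(Φ∘u)(x)) = (Φ'(u(x)))^{α+β+1} M(x, Du(x), D²u(x)) + (Φ'(u(x)))^{α+β} Φ''(u(x)) N(x, Du(x), D²u(x)). -/
open Real Filter Set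

/-- Gradient of `u` at `x` (vector of partial derivatives). -/
noncomputable def vgrad {n : ℕ} (u : (Fin n → ℝ) → ℝ) (x : Fin n → ℝ) : Fin n → ℝ :=
  fun i => fderiv ℝ u x (Pi.single i 1)

/-- Hessian matrix of `u` at `x`. -/
noncomputable def vhess {n : ℕ} (u : (Fin n → ℝ) → ℝ) (x : Fin n → ℝ) :
    Matrix (Fin n) (Fin n) ℝ :=
  Matrix.of fun i j => fderiv ℝ (fun y => fderiv ℝ u y (Pi.single j 1)) x (Pi.single i 1)

noncomputable def Gg (g : ℝ → ℝ) (s : ℝ) : ℝ := ∫ τ in (0:ℝ)..s, g τ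

noncomputable def Phig (g : ℝ → ℝ) (t : ℝ) : ℝ := ∫ s in (0:ℝ)..t, Real.exp (Gg g s)

/-- Condition `(g₀)`. -/
def g0cond (g : ℝ → ℝ) : Prop :=
  ∃ s₀ : ℝ, 0 ≤ s₀ ∧ (∀ s, s₀ ≤ s → 0 ≤ g s) ∧ (∀ s, s ≤ -s₀ → g s ≤ 0)

/-!
With `λ = Φ'(u x) > 0` the chain rule gives `D(Φ ∘ u) = λ Du` and
`D²(Φ ∘ u) = λ D²u + Φ''(u) Du ⊗ Du`, the latter symmetric because `D²u` is.
Homogeneity (h₁) takes the factor `λ` out of the gradient slot as `λ^α`, and (h₂) with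
`γ = λ`, `σ = Φ''(u x)` splits the Hessian slot.
-/

lemma differentiableAt_deriv_of_contDiffAt {Φ : ℝ → ℝ} {t : ℝ} (hΦ : ContDiffAt ℝ 2 Φ t) :
    DifferentiableAt ℝ (deriv Φ) t := by
  have h := ((hΦ.fderiv_right (m := 1) (by norm_num)).differentiableAt one_ne_zero).clm_apply
    (differentiableAt_const (1 : ℝ))
  simpa only [fderiv_apply_one_eq_deriv] using h

lemma fderiv_comp_eq_deriv_smul {E : Type*} [NormedAddCommGroup E] [NormedSpace ℝ E]
    {Φ : ℝ → ℝ} {u : E → ℝ} {x : E} (hΦ : DifferentiableAt ℝ Φ (u x))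
    (hu : DifferentiableAt ℝ u x) :
    fderiv ℝ (Φ ∘ u) x = deriv Φ (u x) • fderiv ℝ u x :=
  (hΦ.hasDerivAt.comp_hasFDerivAt x hu.hasFDerivAt).fderiv

lemma vgrad_comp {n : ℕ} {Φ : ℝ → ℝ} {u : (Fin n → ℝ) → ℝ} {x : Fin n → ℝ}
    (hΦ : DifferentiableAt ℝ Φ (u x)) (hu : DifferentiableAt ℝ u x) :
    vgrad (Φ ∘ u) x = deriv Φ (u x) • vgrad u x := by
  ext i
  simp [vgrad, fderiv_comp_eq_deriv_smul hΦ hu]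

lemma vhess_apply_of_differentiableAt {n : ℕ} {u : (Fin n → ℝ) → ℝ} {x : Fin n → ℝ}
    (hu : DifferentiableAt ℝ (fderiv ℝ u) x) (i j : Fin n) :
    vhess u x i j = fderiv ℝ (fderiv ℝ u) x (Pi.single i 1) (Pi.single j 1) := by
  simp [vhess, fderiv_clm_apply hu (differentiableAt_const _)]

lemma vhess_isSymm {n : ℕ} {u : (Fin n → ℝ) → ℝ} {x : Fin n → ℝ} (hu : ContDiffAt ℝ 2 u x) :
    (vhess u x).IsSymm := by
  have hdiff := (hu.fderiv_right (m := 1) (by norm_num)).differentiableAt one_ne_zero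
  ext i j
  simp only [Matrix.transpose_apply, vhess_apply_of_differentiableAt hdiff]
  exact hu.isSymmSndFDerivAt (by simp) _ _

lemma vhess_comp {n : ℕ} {Φ : ℝ → ℝ} {u : (Fin n → ℝ) → ℝ} {x : Fin n → ℝ}
    (hΦ : ContDiffAt ℝ 2 Φ (u x)) (hu : ContDiffAt ℝ 2 u x) :
    vhess (Φ ∘ u) x = deriv Φ (u x) • vhess u x
      + deriv (deriv Φ) (u x) • Matrix.vecMulVec (vgrad u x) (vgrad u x) := by
  have hu_near : ∀ᶠ y in nhds x, DifferentiableAt ℝ u y :=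
    (hu.eventually (by simp)).mono fun y hy => hy.differentiableAt two_ne_zero
  have hΦ_near : ∀ᶠ y in nhds x, DifferentiableAt ℝ Φ (u y) :=
    (hu.continuousAt.eventually (hΦ.eventually (by simp))).mono
      fun y hy => hy.differentiableAt two_ne_zero
  have hdu := (hu.fderiv_right (m := 1) (by norm_num)).differentiableAt one_ne_zero
  have hdΦ : DifferentiableAt ℝ (deriv Φ ∘ u) x :=
    (differentiableAt_deriv_of_contDiffAt hΦ).comp x (hu.differentiableAt two_ne_zero)
  ext i j
  have hpartial : (fun y => fderiv ℝ (Φ ∘ u) y (Pi.single j 1))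
      =ᶠ[nhds x] fun y => (deriv Φ ∘ u) y * fderiv ℝ u y (Pi.single j 1) := by
    filter_upwards [hu_near, hΦ_near] with y hyu hyΦ
    simp [fderiv_comp_eq_deriv_smul hyΦ hyu]
  rw [vhess, Matrix.of_apply, hpartial.fderiv_eq,
    fderiv_fun_mul hdΦ (hdu.clm_apply (differentiableAt_const _)),
    fderiv_comp_eq_deriv_smul (differentiableAt_deriv_of_contDiffAt hΦ)
      (hu.differentiableAt two_ne_zero)]
  simp only [vhess, vgrad, Function.comp_apply, add_apply,
    smul_apply, smul_eq_mul, Matrix.add_apply, Matrix.smul_apply,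
    Matrix.of_apply, Matrix.vecMulVec_apply]
  ring

lemma isSymm_smul_add_smul_vecMulVec {ι : Type*} {X : Matrix ι ι ℝ} (hX : X.IsSymm)
    (γ σ : ℝ) (p : ι → ℝ) : (γ • X + σ • Matrix.vecMulVec p p).IsSymm :=
  (hX.smul γ).add (Matrix.IsSymm.smul (Matrix.transpose_vecMulVec p p) σ)

lemma apply_smul_smul_add_smul_vecMulVec {ι : Type*} {M N : (ι → ℝ) → Matrix ι ι ℝ → ℝ}
    {α : ℝ} {β : ℕ}
    (h1 : ∀ lam : ℝ, lam ≠ 0 → ∀ (p : ι → ℝ) (X : Matrix ι ι ℝ),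
      X.IsSymm → M (lam • p) X = |lam| ^ α * M p X)
    (h2 : ∀ (p : ι → ℝ) (X : Matrix ι ι ℝ), X.IsSymm → ∀ γ : ℝ, γ ≠ 0 → ∀ σ : ℝ,
      M p (γ • X + σ • Matrix.vecMulVec p p) = γ ^ (β + 1) * M p X + σ * γ ^ β * N p X)
    {p : ι → ℝ} {X : Matrix ι ι ℝ} (hX : X.IsSymm) {lam : ℝ} (hlam : 0 < lam) (σ : ℝ) :
    M (lam • p) (lam • X + σ • Matrix.vecMulVec p p)
      = lam ^ (α + β + 1) * M p X + lam ^ (α + β) * σ * N p X := by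
  rw [h1 lam hlam.ne' _ _ (isSymm_smul_add_smul_vecMulVec hX lam σ p),
    h2 p X hX lam hlam.ne' σ, abs_of_pos hlam, Real.rpow_add hlam, Real.rpow_add hlam,
    Real.rpow_one, Real.rpow_natCast]
  ring

theorem stmt3_general {n : ℕ} (Ω : Set (Fin n → ℝ)) (hΩ : IsOpen Ω)
    (M N : (Fin n → ℝ) → (Fin n → ℝ) → Matrix (Fin n) (Fin n) ℝ → ℝ)
    (α : ℝ) (β : ℕ)
    (h1 : ∀ x ∈ Ω, ∀ lam : ℝ, lam ≠ 0 → ∀ (p : Fin n → ℝ) (X : Matrix (Fin n) (Fin n) ℝ),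
      X.IsSymm → M x (lam • p) X = |lam| ^ α * M x p X)
    (h2 : ∀ x ∈ Ω, ∀ (p : Fin n → ℝ) (X : Matrix (Fin n) (Fin n) ℝ), X.IsSymm →
      ∀ γ : ℝ, γ ≠ 0 → ∀ σ : ℝ,
        M x p (γ • X + σ • Matrix.vecMulVec p p)
          = γ ^ (β + 1) * M x p X + σ * γ ^ β * N x p X)
    (u : (Fin n → ℝ) → ℝ) (hu : ContDiffOn ℝ 2 u Ω)
    (I : Set ℝ) (hIopen : IsOpen I)
    (hrange : u '' Ω ⊆ I)
    (Φ : ℝ → ℝ) (hΦ : ContDiffOn ℝ 2 Φ I) (hΦ' : ∀ t ∈ I, 0 < deriv Φ t) :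
    ∀ x ∈ Ω,
      M x (vgrad (Φ ∘ u) x) (vhess (Φ ∘ u) x)
        = (deriv Φ (u x)) ^ (α + (β : ℝ) + 1) * M x (vgrad u x) (vhess u x)
          + (deriv Φ (u x)) ^ (α + (β : ℝ)) * deriv (deriv Φ) (u x)
              * N x (vgrad u x) (vhess u x) := by
  intro x hx
  have hxI : u x ∈ I := hrange ⟨x, hx, rfl⟩
  have hux : ContDiffAt ℝ 2 u x := hu.contDiffAt (hΩ.mem_nhds hx)
  have hΦx : ContDiffAt ℝ 2 Φ (u x) := hΦ.contDiffAt (hIopen.mem_nhds hxI)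
  rw [vgrad_comp (hΦx.differentiableAt two_ne_zero) (hux.differentiableAt two_ne_zero),
    vhess_comp hΦx hux]
  exact apply_smul_smul_add_smul_vecMulVec (h1 x hx) (h2 x hx) (vhess_isSymm hux)
    (hΦ' _ hxI) _

/-- chain rule identity for operators satisfying (h₁), (h₂) under a C² change of
variables Φ with Φ' > 0 on an open interval containing the range of u. -/
theorem stmt3 {n : ℕ} (Ω : Set (Fin n → ℝ)) (hΩ : IsOpen Ω)
    (M N : (Fin n → ℝ) → (Fin n → ℝ) → Matrix (Fin n) (Fin n) ℝ → ℝ)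
    (α : ℝ) (β : ℕ)
    (h1 : ∀ x ∈ Ω, ∀ lam : ℝ, lam ≠ 0 → ∀ (p : Fin n → ℝ) (X : Matrix (Fin n) (Fin n) ℝ),
      X.IsSymm → M x (lam • p) X = |lam| ^ α * M x p X)
    (h2 : ∀ x ∈ Ω, ∀ (p : Fin n → ℝ) (X : Matrix (Fin n) (Fin n) ℝ), X.IsSymm →
      ∀ γ : ℝ, γ ≠ 0 → ∀ σ : ℝ,
        M x p (γ • X + σ • Matrix.vecMulVec p p)
          = γ ^ (β + 1) * M x p X + σ * γ ^ β * N x p X)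
    (u : (Fin n → ℝ) → ℝ) (hu : ContDiffOn ℝ 2 u Ω)
    (I : Set ℝ) (hIopen : IsOpen I) (hIinterval : I.OrdConnected)
    (hrange : u '' Ω ⊆ I)
    (Φ : ℝ → ℝ) (hΦ : ContDiffOn ℝ 2 Φ I) (hΦ' : ∀ t ∈ I, 0 < deriv Φ t) :
    ∀ x ∈ Ω,
      M x (vgrad (Φ ∘ u) x) (vhess (Φ ∘ u) x)
        = (deriv Φ (u x)) ^ (α + (β : ℝ) + 1) * M x (vgrad u x) (vhess u x)
          + (deriv Φ (u x)) ^ (α + (β : ℝ)) * deriv (deriv Φ) (u x)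
              * N x (vgrad u x) (vhess u x) :=
  stmt3_general Ω hΩ M N α β h1 h2 u hu I hIopen hrange Φ hΦ hΦ'
end

section
/- Let f : Ω×ℝ → ℝ be continuous, let g : ℝ → ℝ be continuous satisfying (g₀), and suppose M, N satisfy (h₁) with exponent α ∈ ℝ and (h₂) with exponent β ∈ ℕ ∪ {0}. If v : Ω → ℝ is a viscosity solution of M(x, Dw, D²w) + h(x, w) = 0 in Ω, where h(x, s) = e^{(α+β+1)G(Φ_g⁻¹(s))} f(x, Φ_g⁻¹(s)), then u = Φ_g⁻¹ ∘ v is a viscosity solution of M(x, Dw, D²w) + g(w) N(x, Dw, D²w) + f(x, w) = 0 in Ω. -/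
/-!
Since `Φ_g` is increasing, a test function `φ` touching `u = Φ_g⁻¹ ∘ v` from above or below at
`x₀` yields the test function `ψ = Φ_g ∘ (φ + c)`, `c = u(x₀) - φ(x₀)`, touching `v` at `x₀` in the
same way. By the chain rule `Dψ = λ Dφ` and `D²ψ = λ D²φ + λ g(u) Dφ ⊗ Dφ` with `λ = e^{G(u)} > 0`,
so `(h₁)` and `(h₂)` give `M(x, Dψ, D²ψ) = λ^{α+β+1} (M(x, Dφ, D²φ) + g(u) N(x, Dφ, D²φ))`. The
equation for `v` at `x₀` is therefore `λ^{α+β+1}` times the equation for `u`, with the same sign.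
-/

open Real Filter Set

/-- Viscosity subsolution of `𝓕(x, w, Dw, D²w) = 0` in `Ω`. -/
def ViscositySubsolution {n : ℕ} (Ω : Set (Fin n → ℝ))
    (F : (Fin n → ℝ) → ℝ → (Fin n → ℝ) → Matrix (Fin n) (Fin n) ℝ → ℝ)
    (w : (Fin n → ℝ) → ℝ) : Prop :=
  ∀ φ : (Fin n → ℝ) → ℝ, ContDiffOn ℝ 2 φ Ω →
    ∀ x₀ ∈ Ω, IsLocalMaxOn (fun x => w x - φ x) Ω x₀ →
      F x₀ (w x₀) (vgrad φ x₀) (vhess φ x₀) ≤ 0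

/-- Viscosity supersolution of `𝓕(x, w, Dw, D²w) = 0` in `Ω`. -/
def ViscositySupersolution {n : ℕ} (Ω : Set (Fin n → ℝ))
    (F : (Fin n → ℝ) → ℝ → (Fin n → ℝ) → Matrix (Fin n) (Fin n) ℝ → ℝ)
    (w : (Fin n → ℝ) → ℝ) : Prop :=
  ∀ φ : (Fin n → ℝ) → ℝ, ContDiffOn ℝ 2 φ Ω →
    ∀ x₀ ∈ Ω, IsLocalMinOn (fun x => w x - φ x) Ω x₀ →
      0 ≤ F x₀ (w x₀) (vgrad φ x₀) (vhess φ x₀)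

/-- Viscosity solution: both a viscosity subsolution and a viscosity supersolution. -/
def ViscositySolution {n : ℕ} (Ω : Set (Fin n → ℝ))
    (F : (Fin n → ℝ) → ℝ → (Fin n → ℝ) → Matrix (Fin n) (Fin n) ℝ → ℝ)
    (w : (Fin n → ℝ) → ℝ) : Prop :=
  ViscositySubsolution Ω F w ∧ ViscositySupersolution Ω F w

lemma hasDerivAt_Gg {g : ℝ → ℝ} (hg : Continuous g) (t : ℝ) : HasDerivAt (Gg g) (g t) t :=
  intervalIntegral.integral_hasDerivAt_right (hg.intervalIntegrable _ _)
    (hg.stronglyMeasurableAtFilter _ _) hg.continuousAt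

lemma contDiff_Gg {g : ℝ → ℝ} (hg : Continuous g) : ContDiff ℝ 1 (Gg g) := by
  rw [contDiff_one_iff_deriv]
  refine ⟨fun t => (hasDerivAt_Gg hg t).differentiableAt, ?_⟩
  rwa [funext fun t => (hasDerivAt_Gg hg t).deriv]

lemma hasDerivAt_Phig {g : ℝ → ℝ} (hg : Continuous g) (t : ℝ) :
    HasDerivAt (Phig g) (exp (Gg g t)) t := by
  have hc : Continuous fun s => exp (Gg g s) := continuous_exp.comp (contDiff_Gg hg).continuous
  exact intervalIntegral.integral_hasDerivAt_right (hc.intervalIntegrable _ _)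
    (hc.stronglyMeasurableAtFilter _ _) hc.continuousAt

lemma contDiff_Phig {g : ℝ → ℝ} (hg : Continuous g) : ContDiff ℝ 2 (Phig g) := by
  rw [show (2 : WithTop ℕ∞) = 1 + 1 by norm_num, contDiff_succ_iff_deriv]
  refine ⟨fun t => (hasDerivAt_Phig hg t).differentiableAt, by simp, ?_⟩
  rw [funext fun t => (hasDerivAt_Phig hg t).deriv]
  exact contDiff_exp.of_le le_top |>.comp (contDiff_Gg hg)

lemma strictMono_Phig {g : ℝ → ℝ} (hg : Continuous g) : StrictMono (Phig g) :=
  strictMono_of_hasDerivAt_pos (hasDerivAt_Phig hg) fun _ => exp_pos _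

section TestFunctions

variable {X : Type*} [TopologicalSpace X] {s : Set X} {x₀ : X} {Φ : ℝ → ℝ} {u φ : X → ℝ}

lemma IsLocalMaxOn.monotone_comp_sub (hΦ : Monotone Φ)
    (h : IsLocalMaxOn (fun x => u x - φ x) s x₀) :
    IsLocalMaxOn (fun x => Φ (u x) - Φ (φ x + (u x₀ - φ x₀))) s x₀ := by
  filter_upwards [h] with y hy
  have : Φ (u y) ≤ Φ (φ y + (u x₀ - φ x₀)) := hΦ (by linarith)
  simp only [add_sub_cancel, sub_self]
  linarith

lemma IsLocalMinOn.monotone_comp_sub (hΦ : Monotone Φ)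
    (h : IsLocalMinOn (fun x => u x - φ x) s x₀) :
    IsLocalMinOn (fun x => Φ (u x) - Φ (φ x + (u x₀ - φ x₀))) s x₀ := by
  filter_upwards [h] with y hy
  have : Φ (φ y + (u x₀ - φ x₀)) ≤ Φ (u y) := hΦ (by linarith)
  simp only [add_sub_cancel, sub_self]
  linarith

end TestFunctions

section ChainRule

variable {n : ℕ} {φ : (Fin n → ℝ) → ℝ} {x : Fin n → ℝ}

lemma hasFDerivAt_fderiv_apply (hφ : ContDiffAt ℝ 2 φ x) (w : Fin n → ℝ) :
    HasFDerivAt (fun y => fderiv ℝ φ y w)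
      ((ContinuousLinearMap.apply ℝ ℝ w).comp (fderiv ℝ (fderiv ℝ φ) x)) x :=
  (ContinuousLinearMap.apply ℝ ℝ w).hasFDerivAt.comp x
    ((hφ.fderiv_right le_rfl).differentiableAt one_ne_zero).hasFDerivAt

lemma vhess_apply (hφ : ContDiffAt ℝ 2 φ x) (i j : Fin n) :
    vhess φ x i j = fderiv ℝ (fderiv ℝ φ) x (Pi.single i 1) (Pi.single j 1) := by
  simp only [vhess, Matrix.of_apply, (hasFDerivAt_fderiv_apply hφ _).fderiv]
  rfl

lemma vhess_isSymm_s6 (hφ : ContDiffAt ℝ 2 φ x) : (vhess φ x).IsSymm := by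
  have hs := hφ.isSymmSndFDerivAt (by simp [minSmoothness_of_isRCLikeNormedField])
  refine Matrix.IsSymm.ext fun i j => ?_
  rw [vhess_apply hφ, vhess_apply hφ]
  exact hs _ _

lemma vgrad_comp_s6 {F : ℝ → ℝ} {F' : ℝ} (hF : HasDerivAt F F' (φ x))
    (hφ : DifferentiableAt ℝ φ x) : vgrad (fun y => F (φ y)) x = F' • vgrad φ x := by
  have hFφ : HasFDerivAt (fun y => F (φ y)) (F' • fderiv ℝ φ x) x :=
    hF.comp_hasFDerivAt x hφ.hasFDerivAt
  funext i
  simp [vgrad, hFφ.fderiv]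

lemma vhess_comp_s6 {F F' : ℝ → ℝ} {F'' : ℝ} (hF : ∀ t, HasDerivAt F (F' t) t)
    (hF' : HasDerivAt F' F'' (φ x)) (hφ : ContDiffAt ℝ 2 φ x) :
    vhess (fun y => F (φ y)) x =
      F' (φ x) • vhess φ x + F'' • Matrix.vecMulVec (vgrad φ x) (vgrad φ x) := by
  ext i j
  have hderiv : (fun y => fderiv ℝ (fun z => F (φ z)) y (Pi.single j 1))
      =ᶠ[nhds x] fun y => F' (φ y) * fderiv ℝ φ y (Pi.single j 1) := by
    filter_upwards [hφ.eventually (by simp)] with y hy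
    have hFφ : HasFDerivAt (fun z => F (φ z)) (F' (φ y) • fderiv ℝ φ y) y :=
      (hF _).comp_hasFDerivAt y (hy.differentiableAt two_ne_zero).hasFDerivAt
    simp [hFφ.fderiv]
  have hF'φ : HasFDerivAt (fun y => F' (φ y)) (F'' • fderiv ℝ φ x) x :=
    hF'.comp_hasFDerivAt x (hφ.differentiableAt two_ne_zero).hasFDerivAt
  have hφj := hasFDerivAt_fderiv_apply hφ (Pi.single j 1)
  have hprod : HasFDerivAt (fun y => F' (φ y) * fderiv ℝ φ y (Pi.single j 1)) _ x := hF'φ.mul hφj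
  simp only [vhess, vgrad, Matrix.of_apply, hderiv.fderiv_eq, hprod.fderiv, hφj.fderiv,
    add_apply, smul_apply, ContinuousLinearMap.comp_apply, ContinuousLinearMap.apply_apply,
    smul_eq_mul, Matrix.smul_of, Matrix.add_apply, Matrix.smul_apply, Pi.smul_apply,
    Matrix.vecMulVec_apply, add_right_inj]
  ring

end ChainRule

lemma Matrix.isSymm_vecMulVec {n α : Type*} [CommMagma α] (p : n → α) : (Matrix.vecMulVec p p).IsSymm := by
  rw [Matrix.IsSymm, Matrix.transpose_vecMulVec]

section Operator

variable {n : ℕ} {M N : (Fin n → ℝ) → (Fin n → ℝ) → Matrix (Fin n) (Fin n) ℝ → ℝ}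
  {α : ℝ} {β : ℕ} {x : Fin n → ℝ}

lemma M_smul_of_homogeneous
    (h1 : ∀ lam : ℝ, lam ≠ 0 → ∀ (p : Fin n → ℝ) (X : Matrix (Fin n) (Fin n) ℝ),
      X.IsSymm → M x (lam • p) X = |lam| ^ α * M x p X)
    (h2 : ∀ (p : Fin n → ℝ) (X : Matrix (Fin n) (Fin n) ℝ), X.IsSymm →
      ∀ γ : ℝ, γ ≠ 0 → ∀ σ : ℝ,
        M x p (γ • X + σ • Matrix.vecMulVec p p) = γ ^ (β + 1) * M x p X + σ * γ ^ β * N x p X)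
    {lam : ℝ} (hlam : 0 < lam) (s : ℝ) (p : Fin n → ℝ) {X : Matrix (Fin n) (Fin n) ℝ}
    (hX : X.IsSymm) :
    M x (lam • p) (lam • X + (lam * s) • Matrix.vecMulVec p p)
      = lam ^ (α + β + 1) * (M x p X + s * N x p X) := by
  have hsymm := (hX.smul lam).add ((Matrix.isSymm_vecMulVec p).smul (lam * s))
  rw [h1 lam hlam.ne' p _ hsymm, h2 p X hX lam hlam.ne', abs_of_pos hlam,
    rpow_add hlam, rpow_add hlam, rpow_one, rpow_natCast, pow_succ]
  ring

lemma M_Phig_comp_eq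
    (h1 : ∀ lam : ℝ, lam ≠ 0 → ∀ (p : Fin n → ℝ) (X : Matrix (Fin n) (Fin n) ℝ),
      X.IsSymm → M x (lam • p) X = |lam| ^ α * M x p X)
    (h2 : ∀ (p : Fin n → ℝ) (X : Matrix (Fin n) (Fin n) ℝ), X.IsSymm →
      ∀ γ : ℝ, γ ≠ 0 → ∀ σ : ℝ,
        M x p (γ • X + σ • Matrix.vecMulVec p p) = γ ^ (β + 1) * M x p X + σ * γ ^ β * N x p X)
    {g : ℝ → ℝ} (hg : Continuous g) {φ : (Fin n → ℝ) → ℝ} (hφ : ContDiffAt ℝ 2 φ x) (r : ℝ) :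
    let ψ := fun y => Phig g (φ y + (r - φ x))
    M x (vgrad ψ x) (vhess ψ x) = exp ((α + β + 1) * Gg g r)
      * (M x (vgrad φ x) (vhess φ x) + g r * N x (vgrad φ x) (vhess φ x)) := by
  intro ψ
  have hF (t : ℝ) : HasDerivAt (fun t => Phig g (t + (r - φ x))) (exp (Gg g (t + (r - φ x)))) t :=
    (hasDerivAt_Phig hg _).comp_add_const t _
  have hF' : HasDerivAt (fun t => exp (Gg g (t + (r - φ x))))
      (exp (Gg g (φ x + (r - φ x))) * g (φ x + (r - φ x))) (φ x) :=
    ((hasDerivAt_Gg hg _).exp).comp_add_const _ _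
  rw [vgrad_comp_s6 (hF _) (hφ.differentiableAt two_ne_zero), vhess_comp_s6 hF hF' hφ]
  simp only [add_sub_cancel]
  rw [M_smul_of_homogeneous h1 h2 (exp_pos _) _ _ (vhess_isSymm_s6 hφ), ← exp_mul,
    mul_comm (Gg g r)]

end Operator

theorem stmt6_general {n : ℕ} (Ω : Set (Fin n → ℝ)) (hΩ : IsOpen Ω)
    (f : (Fin n → ℝ) → ℝ → ℝ)
    (g : ℝ → ℝ) (hg : Continuous g)
    (M N : (Fin n → ℝ) → (Fin n → ℝ) → Matrix (Fin n) (Fin n) ℝ → ℝ)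
    (α : ℝ) (β : ℕ)
    (h1 : ∀ x ∈ Ω, ∀ lam : ℝ, lam ≠ 0 → ∀ (p : Fin n → ℝ) (X : Matrix (Fin n) (Fin n) ℝ),
      X.IsSymm → M x (lam • p) X = |lam| ^ α * M x p X)
    (h2 : ∀ x ∈ Ω, ∀ (p : Fin n → ℝ) (X : Matrix (Fin n) (Fin n) ℝ), X.IsSymm →
      ∀ γ : ℝ, γ ≠ 0 → ∀ σ : ℝ,
        M x p (γ • X + σ • Matrix.vecMulVec p p)
          = γ ^ (β + 1) * M x p X + σ * γ ^ β * N x p X)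
    (Φinv : ℝ → ℝ)
    (hright : ∀ s : ℝ, Phig g (Φinv s) = s)
    (v : (Fin n → ℝ) → ℝ)
    (hsol : ViscositySolution Ω
      (fun x r p X => M x p X
        + Real.exp ((α + (β : ℝ) + 1) * Gg g (Φinv r)) * f x (Φinv r)) v) :
    ViscositySolution Ω
      (fun x r p X => M x p X + g r * N x p X + f x r) (Φinv ∘ v) := by
  have hΦ := (strictMono_Phig hg).monotone
  have hψ {φ : (Fin n → ℝ) → ℝ} (hφ : ContDiffOn ℝ 2 φ Ω) (c : ℝ) :
      ContDiffOn ℝ 2 (fun y => Phig g (φ y + c)) Ω :=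
    (contDiff_Phig hg).comp_contDiffOn (hφ.add contDiffOn_const)
  have hφ_at {φ : (Fin n → ℝ) → ℝ} (hφ : ContDiffOn ℝ 2 φ Ω) {x₀} (hx₀ : x₀ ∈ Ω) :
      ContDiffAt ℝ 2 φ x₀ :=
    hφ.contDiffAt (hΩ.mem_nhds hx₀)
  constructor
  · intro φ hφ x₀ hx₀ hmax
    have hv := hsol.1 _ (hψ hφ _) x₀ hx₀
      (by simpa only [Function.comp_apply, hright] using hmax.monotone_comp_sub hΦ)
    dsimp only at hv
    rw [M_Phig_comp_eq (h1 x₀ hx₀) (h2 x₀ hx₀) hg (hφ_at hφ hx₀), ← mul_add] at hv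
    exact nonpos_of_mul_nonpos_right hv (exp_pos _)
  · intro φ hφ x₀ hx₀ hmin
    have hv := hsol.2 _ (hψ hφ _) x₀ hx₀
      (by simpa only [Function.comp_apply, hright] using hmin.monotone_comp_sub hΦ)
    dsimp only at hv
    rw [M_Phig_comp_eq (h1 x₀ hx₀) (h2 x₀ hx₀) hg (hφ_at hφ hx₀), ← mul_add] at hv
    exact nonneg_of_mul_nonneg_right hv (exp_pos _)

/-- Theorem 2, one direction: if v is a viscosity solution of
M(x,Dw,D²w) + h(x,w) = 0 in Ω, then u = Φ_g⁻¹ ∘ v is a viscosity solution of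
M(x,Dw,D²w) + g(w)N(x,Dw,D²w) + f(x,w) = 0 in Ω. -/
theorem stmt6 {n : ℕ} (Ω : Set (Fin n → ℝ)) (hΩ : IsOpen Ω)
    (f : (Fin n → ℝ) → ℝ → ℝ)
    (hf : ContinuousOn (fun q : (Fin n → ℝ) × ℝ => f q.1 q.2) (Ω ×ˢ Set.univ))
    (g : ℝ → ℝ) (hg : Continuous g) (hg0 : g0cond g)
    (M N : (Fin n → ℝ) → (Fin n → ℝ) → Matrix (Fin n) (Fin n) ℝ → ℝ)
    (hM : ContinuousOn
      (fun q : (Fin n → ℝ) × (Fin n → ℝ) × Matrix (Fin n) (Fin n) ℝ => M q.1 q.2.1 q.2.2)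
      (Ω ×ˢ Set.univ))
    (α : ℝ) (β : ℕ)
    (h1 : ∀ x ∈ Ω, ∀ lam : ℝ, lam ≠ 0 → ∀ (p : Fin n → ℝ) (X : Matrix (Fin n) (Fin n) ℝ),
      X.IsSymm → M x (lam • p) X = |lam| ^ α * M x p X)
    (h2 : ∀ x ∈ Ω, ∀ (p : Fin n → ℝ) (X : Matrix (Fin n) (Fin n) ℝ), X.IsSymm →
      ∀ γ : ℝ, γ ≠ 0 → ∀ σ : ℝ,
        M x p (γ • X + σ • Matrix.vecMulVec p p)
          = γ ^ (β + 1) * M x p X + σ * γ ^ β * N x p X)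
    (Φinv : ℝ → ℝ) (hleft : ∀ t : ℝ, Φinv (Phig g t) = t)
    (hright : ∀ s : ℝ, Phig g (Φinv s) = s)
    (v : (Fin n → ℝ) → ℝ) (hv : ContinuousOn v Ω)
    (hsol : ViscositySolution Ω
      (fun x r p X => M x p X
        + Real.exp ((α + (β : ℝ) + 1) * Gg g (Φinv r)) * f x (Φinv r)) v) :
    ViscositySolution Ω
      (fun x r p X => M x p X + g r * N x p X + f x r) (Φinv ∘ v) :=
  stmt6_general Ω hΩ f g hg M N α β h1 h2 Φinv hright v hsol
end
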